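/- arXiv:1405.6502 — 2 statements merged into one kernel-verified Lean document; each statement's English description precedes it below -/
import Mathlib

section
/- Every monotone increasing function f: [0,1] → X into a Dedekind complete Banach lattice X is order-McShane integrable with respect to Lebesgue measure. -/
open MeasureTheory Set Filter

/-- A tagged partition of the set `A`: finitely many pairwise disjoint measurable
sets covering `A`, each with a tag point. -/
structure TaggedPart (T : Type*) [MeasurableSpace T] (A : Set T) where
  k : ℕ
  E : Fin k → Set T
  tag : Fin k → T
  meas : ∀ i, MeasurableSet (E i)
  disj : ∀ i j, i ≠ j → Disjoint (E i) (E j)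
  cover : (⋃ i, E i) = A

namespace TaggedPart

variable {T : Type*} [MeasurableSpace T] {A : Set T}

/-- A Henstock partition: each tag belongs to its set. -/
def IsHenstock (P : TaggedPart T A) : Prop := ∀ i, P.tag i ∈ P.E i

/-- `γ`-fineness: each set is within distance `γ (tag)` of its tag. -/
def IsFine [PseudoMetricSpace T] (γ : T → ℝ) (P : TaggedPart T A) : Prop :=
  ∀ i, ∀ w ∈ P.E i, dist w (P.tag i) < γ (P.tag i)

/-- The Riemann sum `σ(f, P) = ∑ μ(Eᵢ) • f(tᵢ)`. -/
noncomputable def sum {X : Type*} [AddCommMonoid X] [Module ℝ X]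
    (P : TaggedPart T A) (f : T → X) (μ : Measure T) : X :=
  ∑ i, (μ (P.E i)).toReal • f (P.tag i)

end TaggedPart

/-- A gage is a strictly positive function. -/
def IsGage {T : Type*} (γ : T → ℝ) : Prop := ∀ t, 0 < γ t

/-- An (o)-sequence: decreasing with infimum `0`. -/
def IsOSeq {X : Type*} [Lattice X] [AddCommGroup X] (b : ℕ → X) : Prop :=
  Antitone b ∧ IsGLB (Set.range b) 0

section Defs

variable {T : Type*} [MeasurableSpace T] [PseudoMetricSpace T]
  {X : Type*} [NormedAddCommGroup X] [Lattice X] [HasSolidNorm X] [IsOrderedAddMonoid X] [NormedSpace ℝ X]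

/-- Order-Henstock integrability of `f` on `A` with integral `J`. -/
def HasOHIntegralOn (f : T → X) (μ : Measure T) (A : Set T) (J : X) : Prop :=
  ∃ b : ℕ → X, IsOSeq b ∧ ∃ γ : ℕ → T → ℝ, (∀ n, IsGage (γ n)) ∧
    ∀ n (P : TaggedPart T A), P.IsHenstock → P.IsFine (γ n) →
      |P.sum f μ - J| ≤ b n

/-- Order-McShane (free partition) integrability of `f` on `A` with integral `J`. -/
def HasOMIntegralOn (f : T → X) (μ : Measure T) (A : Set T) (J : X) : Prop :=
  ∃ b : ℕ → X, IsOSeq b ∧ ∃ γ : ℕ → T → ℝ, (∀ n, IsGage (γ n)) ∧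
    ∀ n (P : TaggedPart T A), P.IsFine (γ n) → |P.sum f μ - J| ≤ b n

/-- Order-McShane integrability with a prescribed regulating (o)-sequence `b`. -/
def HasOMIntegralOnWith (f : T → X) (μ : Measure T) (A : Set T) (J : X)
    (b : ℕ → X) : Prop :=
  ∃ γ : ℕ → T → ℝ, (∀ n, IsGage (γ n)) ∧
    ∀ n (P : TaggedPart T A), P.IsFine (γ n) → |P.sum f μ - J| ≤ b n

/-- Norm-Henstock integrability of `f` on `A` with integral `J`. -/
def HasNormHIntegralOn (f : T → X) (μ : Measure T) (A : Set T) (J : X) : Prop :=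
  ∀ ε : ℝ, 0 < ε → ∃ γ : T → ℝ, IsGage γ ∧
    ∀ P : TaggedPart T A, P.IsHenstock → P.IsFine γ → ‖P.sum f μ - J‖ ≤ ε

/-- Norm-McShane (free partition) integrability of `f` on `A` with integral `J`. -/
def HasNormMIntegralOn (f : T → X) (μ : Measure T) (A : Set T) (J : X) : Prop :=
  ∀ ε : ℝ, 0 < ε → ∃ γ : T → ℝ, IsGage γ ∧
    ∀ P : TaggedPart T A, P.IsFine γ → ‖P.sum f μ - J‖ ≤ ε

end Defs

/-!
Compare every Riemann sum with the dyadic sums `Lₙ = ∑ₖ 2⁻ⁿ f(k/2ⁿ)` and `Uₙ = ∑ₖ 2⁻ⁿ f((k+1)/2ⁿ)`.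
For monotone `f`, `Lₙ` increases, `Uₙ` decreases and `Uₙ - Lₙ = 2⁻ⁿ (f 1 - f 0)`, so by Dedekind
completeness `J = sup Lₙ` lies between them. The gage `γₙ(t)` is so small that every point within
`γₙ(t)` of `t` lies in a dyadic cell whose closure contains `t`; hence on each piece `Eᵢ ∩ cell`
the value `f(tᵢ)` lies between the values of `f` at the endpoints of the cell, and splitting a
`γₙ`-fine partition along the cells gives `Lₙ ≤ σ(f, P) ≤ Uₙ`.
-/

open Topology

section LatticeOrderedGroup

variable {α : Type*} [AddCommGroup α] [Lattice α] [IsOrderedAddMonoid α]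

theorem abs_sub_le_of_mem_Icc {a b lo hi : α} (ha : a ∈ Icc lo hi) (hb : b ∈ Icc lo hi) :
    |a - b| ≤ hi - lo :=
  abs_le'.2 ⟨sub_le_sub ha.2 hb.1, by rw [neg_sub]; exact sub_le_sub hb.2 ha.1⟩

variable [Module ℝ α]

theorem inv_two_pow_smul_nonneg {x : α} (hx : 0 ≤ x) (m : ℕ) : 0 ≤ ((2 : ℝ) ^ m)⁻¹ • x := by
  induction m with
  | zero => simpa using hx
  | succ m ih =>
    refine nsmul_two_semiclosed ?_
    rwa [← Nat.cast_smul_eq_nsmul ℝ, smul_smul, pow_succ, mul_inv, mul_left_comm, Nat.cast_two,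
      mul_inv_cancel₀ two_ne_zero, mul_one]

end LatticeOrderedGroup

section NormedLattice

variable {X : Type*} [NormedAddCommGroup X] [Lattice X] [HasSolidNorm X] [IsOrderedAddMonoid X]
  [NormedSpace ℝ X]

-- Approximate `c` from below by dyadic rationals; the positive cone is closed.
theorem smul_nonneg_of_hasSolidNorm {c : ℝ} (hc : 0 ≤ c) {x : X} (hx : 0 ≤ x) : 0 ≤ c • x := by
  have hlim : Tendsto (fun m : ℕ => (⌊c * 2 ^ m⌋₊ / 2 ^ m : ℝ)) atTop (𝓝 c) :=
    (tendsto_nat_floor_mul_div_atTop hc).comp (tendsto_pow_atTop_atTop_of_one_lt one_lt_two)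
  refine ge_of_tendsto' (hlim.smul_const x) fun m => ?_
  rw [div_eq_mul_inv, mul_smul, Nat.cast_smul_eq_nsmul]
  exact nsmul_nonneg (inv_two_pow_smul_nonneg hx m) _

instance HasSolidNorm.posSMulMono : PosSMulMono ℝ X :=
  .of_smul_nonneg fun _ hc _ hx => smul_nonneg_of_hasSolidNorm hc hx

theorem isOSeq_smul {c : ℕ → ℝ} (hc : Antitone c) (hc0 : Tendsto c atTop (𝓝 0)) {d : X}
    (hd : 0 ≤ d) : IsOSeq fun n => c n • d := by
  refine ⟨fun m n hmn => smul_le_smul_of_nonneg_right (hc hmn) hd, ?_, fun x hx => ?_⟩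
  · rintro _ ⟨n, rfl⟩
    exact smul_nonneg (hc.le_of_tendsto hc0 n) hd
  · simpa using ge_of_tendsto' (hc0.smul_const d) fun n => hx ⟨n, rfl⟩

end NormedLattice

section AEPartition

variable {T : Type*} [MeasurableSpace T] {μ : Measure T} {A : Set T} {ι : Type*}

structure IsAEPartition (μ : Measure T) (A : Set T) (s : Finset ι) (I : ι → Set T) : Prop where
  measurableSet : ∀ k ∈ s, MeasurableSet (I k)
  subset : ∀ k ∈ s, I k ⊆ A
  pairwiseDisjoint : (s : Set ι).PairwiseDisjoint I
  ae_le : A ≤ᵐ[μ] ⋃ k ∈ s, I k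

theorem IsAEPartition.measure_eq_sum_inter {s : Finset ι} {I : ι → Set T}
    (hI : IsAEPartition μ A s I) {E : Set T} (hE : MeasurableSet E) (hEA : E ⊆ A) :
    μ E = ∑ k ∈ s, μ (E ∩ I k) := by
  have hE_ae : E ≤ᵐ[μ] (E ∩ ⋃ k ∈ s, I k : Set T) := by
    filter_upwards [hI.ae_le] with x hx hxE using ⟨hxE, hx (hEA hxE)⟩
  rw [← measure_biUnion_finset (hI.pairwiseDisjoint.mono fun k => inter_subset_right)
    fun k hk => hE.inter (hI.measurableSet k hk), ← inter_iUnion₂]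
  exact le_antisymm (measure_mono_ae hE_ae) (measure_mono inter_subset_left)

theorem toReal_measure_smul_le_smul {X : Type*} [AddCommGroup X] [PartialOrder X] [Module ℝ X]
    [PosSMulMono ℝ X] {E : Set T} {a b : X} (h : E.Nonempty → a ≤ b) :
    (μ E).toReal • a ≤ (μ E).toReal • b := by
  rcases E.eq_empty_or_nonempty with rfl | hE
  · simp
  · exact smul_le_smul_of_nonneg_left (h hE) ENNReal.toReal_nonneg

namespace TaggedPart

variable (P : TaggedPart T A)

theorem sum_measure_inter {B : Set T} (hB : MeasurableSet B) (hBA : B ⊆ A) :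
    ∑ i, μ (P.E i ∩ B) = μ B := by
  rw [← measure_biUnion_finset (fun i _ j _ hij => (P.disj i j hij).mono inter_subset_left
    inter_subset_left) fun i _ => (P.meas i).inter hB]
  simp only [Finset.mem_univ, iUnion_true, ← iUnion_inter, P.cover, inter_eq_right.2 hBA]

variable {X : Type*} [AddCommGroup X] [Module ℝ X]

theorem sum_eq_sum_sum_inter {s : Finset ι} {I : ι → Set T} (hI : IsAEPartition μ A s I)
    (hA : μ A ≠ ⊤) (f : T → X) :
    P.sum f μ = ∑ k ∈ s, ∑ i, (μ (P.E i ∩ I k)).toReal • f (P.tag i) := by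
  rw [Finset.sum_comm, TaggedPart.sum]
  refine Finset.sum_congr rfl fun i _ => ?_
  have hEA : P.E i ⊆ A := (subset_iUnion P.E i).trans P.cover.subset
  rw [← Finset.sum_smul, hI.measure_eq_sum_inter (P.meas i) hEA, ENNReal.toReal_sum
    fun k _ => ne_top_of_le_ne_top hA (measure_mono (inter_subset_left.trans hEA))]

theorem sum_smul_eq_sum_sum_inter {s : Finset ι} {I : ι → Set T} (hI : IsAEPartition μ A s I)
    (hA : μ A ≠ ⊤) (a : ι → X) :
    ∑ k ∈ s, (μ (I k)).toReal • a k = ∑ k ∈ s, ∑ i, (μ (P.E i ∩ I k)).toReal • a k := by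
  refine Finset.sum_congr rfl fun k hk => ?_
  rw [← Finset.sum_smul, ← P.sum_measure_inter (hI.measurableSet k hk) (hI.subset k hk),
    ENNReal.toReal_sum fun i _ => ne_top_of_le_ne_top hA
      (measure_mono (inter_subset_right.trans (hI.subset k hk)))]

variable [PartialOrder X] [IsOrderedAddMonoid X] [PosSMulMono ℝ X]

theorem sum_smul_le_sum {s : Finset ι} {I : ι → Set T} (hI : IsAEPartition μ A s I)
    (hA : μ A ≠ ⊤) {f : T → X} {a : ι → X}
    (h : ∀ k ∈ s, ∀ i, (P.E i ∩ I k).Nonempty → a k ≤ f (P.tag i)) :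
    ∑ k ∈ s, (μ (I k)).toReal • a k ≤ P.sum f μ := by
  rw [P.sum_smul_eq_sum_sum_inter hI hA, P.sum_eq_sum_sum_inter hI hA]
  exact Finset.sum_le_sum fun k hk => Finset.sum_le_sum fun i _ =>
    toReal_measure_smul_le_smul (h k hk i)

theorem sum_le_sum_smul {s : Finset ι} {I : ι → Set T} (hI : IsAEPartition μ A s I)
    (hA : μ A ≠ ⊤) {f : T → X} {a : ι → X}
    (h : ∀ k ∈ s, ∀ i, (P.E i ∩ I k).Nonempty → f (P.tag i) ≤ a k) :
    P.sum f μ ≤ ∑ k ∈ s, (μ (I k)).toReal • a k := by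
  rw [P.sum_smul_eq_sum_sum_inter hI hA, P.sum_eq_sum_sum_inter hI hA]
  exact Finset.sum_le_sum fun k hk => Finset.sum_le_sum fun i _ =>
    toReal_measure_smul_le_smul (h k hk i)

end TaggedPart

end AEPartition

-- The distance from `x` to the nearest integer other than `x` itself.
noncomputable def intGap (x : ℝ) : ℝ := min (⌊x⌋ + 1 - x) (x - ⌈x⌉ + 1)

theorem intGap_pos (x : ℝ) : 0 < intGap x :=
  lt_min (by linarith [Int.lt_floor_add_one x]) (by linarith [Int.ceil_lt_add_one x])

theorem mem_Icc_of_abs_sub_lt_intGap {x y : ℝ} {k : ℤ} (hy : y ∈ Ico (k : ℝ) (k + 1))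
    (h : |y - x| < intGap x) : x ∈ Icc (k : ℝ) (k + 1) := by
  obtain ⟨h₁, h₂⟩ := abs_lt.1 h
  have hfloor : intGap x ≤ ⌊x⌋ + 1 - x := min_le_left _ _
  have hceil : intGap x ≤ x - ⌈x⌉ + 1 := min_le_right _ _
  have hk_floor : k < ⌊x⌋ + 1 := by exact_mod_cast (by linarith [hy.1] : (k : ℝ) < ⌊x⌋ + 1)
  have hceil_k : ⌈x⌉ < k + 2 := by exact_mod_cast (by linarith [hy.2] : (⌈x⌉ : ℝ) < k + 2)
  constructor
  · exact Int.le_floor.1 (by omega)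
  · exact_mod_cast Int.ceil_le.1 (show ⌈x⌉ ≤ k + 1 by omega)

noncomputable def dyadicCell (n k : ℕ) : Set ℝ := Ico (k / 2 ^ n) ((k + 1) / 2 ^ n)

noncomputable def dyadicGage (n : ℕ) (t : ℝ) : ℝ := intGap (2 ^ n * t) / 2 ^ n

theorem Icc_div_two_pow_subset_Icc {n k : ℕ} (hk : k < 2 ^ n) :
    Icc ((k : ℝ) / 2 ^ n) ((k + 1) / 2 ^ n) ⊆ Icc 0 1 := by
  refine Icc_subset_Icc (by positivity) ((div_le_one (by positivity)).2 ?_)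
  exact_mod_cast Nat.succ_le_of_lt hk

theorem dyadicGage_pos (n : ℕ) (t : ℝ) : 0 < dyadicGage n t :=
  div_pos (intGap_pos _) (by positivity)

theorem mem_Icc_of_mem_dyadicCell {n k : ℕ} {w t : ℝ} (hw : w ∈ dyadicCell n k)
    (h : dist w t < dyadicGage n t) : t ∈ Icc ((k : ℝ) / 2 ^ n) ((k + 1) / 2 ^ n) := by
  have hc : (0 : ℝ) < 2 ^ n := by positivity
  have hw' : 2 ^ n * w ∈ Ico ((k : ℤ) : ℝ) (k + 1) := by
    push_cast
    exact ⟨(div_le_iff₀' hc).1 hw.1, (lt_div_iff₀' hc).1 hw.2⟩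
  have h' : |2 ^ n * w - 2 ^ n * t| < intGap (2 ^ n * t) := by
    rw [← mul_sub, abs_mul, abs_of_pos hc, ← lt_div_iff₀' hc]
    exact h
  obtain ⟨h₁, h₂⟩ := mem_Icc_of_abs_sub_lt_intGap hw' h'
  push_cast at h₁ h₂
  exact ⟨(div_le_iff₀' hc).2 h₁, (le_div_iff₀' hc).2 h₂⟩

theorem mem_dyadicCell_floor (n : ℕ) {w : ℝ} (hw : 0 ≤ w) : w ∈ dyadicCell n ⌊2 ^ n * w⌋₊ := by
  have hc : (0 : ℝ) < 2 ^ n := by positivity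
  exact ⟨(div_le_iff₀' hc).2 (Nat.floor_le (by positivity)),
    (lt_div_iff₀' hc).2 (Nat.lt_floor_add_one _)⟩

theorem volume_dyadicCell (n k : ℕ) : (volume (dyadicCell n k)).toReal = ((2 : ℝ) ^ n)⁻¹ := by
  rw [dyadicCell, Real.volume_Ico, ← sub_div, add_sub_cancel_left, one_div,
    ENNReal.toReal_ofReal (by positivity)]

theorem isAEPartition_dyadicCell (n : ℕ) :
    IsAEPartition volume (Icc 0 1) (Finset.range (2 ^ n)) (dyadicCell n) where
  measurableSet _ _ := measurableSet_Ico
  subset _ hk := Ico_subset_Icc_self.trans (Icc_div_two_pow_subset_Icc (Finset.mem_range.1 hk))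
  pairwiseDisjoint := by
    have hmono : Monotone fun k : ℕ => (k : ℝ) / 2 ^ n := fun a b hab =>
      div_le_div_of_nonneg_right (Nat.cast_le.2 hab) (by positivity)
    intro k _ l _ hkl
    simpa [dyadicCell, Function.onFun] using hmono.pairwise_disjoint_on_Ico_succ hkl
  ae_le := by
    refine Ico_ae_eq_Icc.symm.le.trans (Eventually.of_forall fun w (hw : w ∈ Ico 0 1) => ?_)
    have hc : (0 : ℝ) < 2 ^ n := by positivity
    refine mem_iUnion₂.2 ⟨⌊2 ^ n * w⌋₊, Finset.mem_range.2 ?_, mem_dyadicCell_floor n hw.1⟩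
    rw [Nat.floor_lt (by nlinarith [hw.1]), Nat.cast_pow, Nat.cast_ofNat]
    nlinarith [hw.2]

section DyadicSum

theorem Finset.sum_range_two_mul {M : Type*} [AddCommMonoid M] (g : ℕ → M) (N : ℕ) :
    ∑ k ∈ Finset.range (2 * N), g k = ∑ j ∈ Finset.range N, (g (2 * j) + g (2 * j + 1)) := by
  induction N with
  | zero => simp
  | succ N ih =>
    rw [Nat.mul_succ, Finset.sum_range_succ, Finset.sum_range_succ, Finset.sum_range_succ, ih,
      add_assoc]

variable {X : Type*} [AddCommGroup X] [Module ℝ X]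

-- Tags shifted by `θ` within each cell: `θ = 0` and `θ = 1` give the lower and upper sums of a
-- monotone function.
noncomputable def dyadicSum (f : ℝ → X) (n : ℕ) (θ : ℝ) : X :=
  ∑ k ∈ Finset.range (2 ^ n), ((2 : ℝ) ^ n)⁻¹ • f ((k + θ) / 2 ^ n)

theorem dyadicSum_succ (f : ℝ → X) (n : ℕ) (θ : ℝ) :
    dyadicSum f (n + 1) θ =
      (2 : ℝ)⁻¹ • dyadicSum f n (θ / 2) + (2 : ℝ)⁻¹ • dyadicSum f n ((θ + 1) / 2) := by
  simp only [dyadicSum, pow_succ', Finset.sum_range_two_mul, Finset.smul_sum,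
    ← Finset.sum_add_distrib]
  refine Finset.sum_congr rfl fun j _ => ?_
  have h₁ : ((2 * j : ℕ) + θ) / (2 * 2 ^ n : ℝ) = (j + θ / 2) / 2 ^ n := by
    push_cast; field_simp
  have h₂ : ((2 * j + 1 : ℕ) + θ) / (2 * 2 ^ n : ℝ) = (j + (θ + 1) / 2) / 2 ^ n := by
    push_cast; field_simp; ring
  rw [h₁, h₂, smul_smul, smul_smul, mul_inv]

theorem dyadicSum_one_sub_dyadicSum_zero (f : ℝ → X) (n : ℕ) :
    dyadicSum f n 1 - dyadicSum f n 0 = ((2 : ℝ) ^ n)⁻¹ • (f 1 - f 0) := by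
  rw [dyadicSum, dyadicSum, ← Finset.sum_sub_distrib]
  convert Finset.sum_range_sub (fun k : ℕ => ((2 : ℝ) ^ n)⁻¹ • f (k / 2 ^ n)) (2 ^ n) using 1
  · simp
  · simp [smul_sub]

variable [PartialOrder X] [IsOrderedAddMonoid X] [PosSMulMono ℝ X] {f : ℝ → X}

theorem monotoneOn_dyadicSum (hf : MonotoneOn f (Icc 0 1)) (n : ℕ) :
    MonotoneOn (dyadicSum f n) (Icc 0 1) := by
  intro θ hθ η hη hθη
  refine Finset.sum_le_sum fun k hk => smul_le_smul_of_nonneg_left ?_ (by positivity)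
  have hmem : ∀ ζ ∈ Icc (0 : ℝ) 1, (k + ζ) / 2 ^ n ∈ Icc (0 : ℝ) 1 := fun ζ hζ =>
    Icc_div_two_pow_subset_Icc (Finset.mem_range.1 hk)
      ⟨by gcongr; linarith [hζ.1], by gcongr; exact hζ.2⟩
  exact hf (hmem θ hθ) (hmem η hη) (by gcongr)

theorem monotone_dyadicSum_zero (hf : MonotoneOn f (Icc 0 1)) :
    Monotone fun n => dyadicSum f n 0 := by
  refine monotone_nat_of_le_succ fun n => ?_
  rw [dyadicSum_succ, zero_div, zero_add]
  calc dyadicSum f n 0 = (2 : ℝ)⁻¹ • dyadicSum f n 0 + (2 : ℝ)⁻¹ • dyadicSum f n 0 := by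
        rw [← add_smul]; norm_num
    _ ≤ _ := by
        gcongr
        exact monotoneOn_dyadicSum hf n (by norm_num) (by norm_num) (by norm_num)

theorem antitone_dyadicSum_one (hf : MonotoneOn f (Icc 0 1)) :
    Antitone fun n => dyadicSum f n 1 := by
  refine antitone_nat_of_succ_le fun n => ?_
  rw [dyadicSum_succ, one_add_one_eq_two, div_self two_ne_zero]
  calc _ ≤ (2 : ℝ)⁻¹ • dyadicSum f n 1 + (2 : ℝ)⁻¹ • dyadicSum f n 1 := by
        gcongr
        exact monotoneOn_dyadicSum hf n (by norm_num) (by norm_num) (by norm_num)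
    _ = dyadicSum f n 1 := by rw [← add_smul]; norm_num

theorem dyadicSum_zero_le_dyadicSum_one (hf : MonotoneOn f (Icc 0 1)) (p q : ℕ) :
    dyadicSum f p 0 ≤ dyadicSum f q 1 :=
  calc dyadicSum f p 0 ≤ dyadicSum f (max p q) 0 := monotone_dyadicSum_zero hf (le_max_left p q)
    _ ≤ dyadicSum f (max p q) 1 :=
        monotoneOn_dyadicSum hf _ (left_mem_Icc.2 zero_le_one) (right_mem_Icc.2 zero_le_one)
          zero_le_one
    _ ≤ dyadicSum f q 1 := antitone_dyadicSum_one hf (le_max_right p q)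

end DyadicSum

theorem TaggedPart.sum_mem_Icc_dyadicSum {X : Type*} [AddCommGroup X] [PartialOrder X]
    [IsOrderedAddMonoid X] [Module ℝ X] [PosSMulMono ℝ X] {f : ℝ → X}
    (hf : MonotoneOn f (Icc 0 1)) {n : ℕ} {P : TaggedPart ℝ (Icc 0 1)}
    (hP : P.IsFine (dyadicGage n)) :
    P.sum f volume ∈ Icc (dyadicSum f n 0) (dyadicSum f n 1) := by
  have htag : ∀ k ∈ Finset.range (2 ^ n), ∀ i, (P.E i ∩ dyadicCell n k).Nonempty →
      P.tag i ∈ Icc ((k : ℝ) / 2 ^ n) ((k + 1) / 2 ^ n) := by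
    rintro k - i ⟨w, hwE, hwI⟩
    exact mem_Icc_of_mem_dyadicCell hwI (hP i w hwE)
  have hsum : ∀ θ, dyadicSum f n θ = ∑ k ∈ Finset.range (2 ^ n),
      (volume (dyadicCell n k)).toReal • f ((k + θ) / 2 ^ n) := by
    simp only [dyadicSum, volume_dyadicCell, implies_true]
  have hA : volume (Icc (0 : ℝ) 1) ≠ ⊤ := by simp
  constructor
  · rw [hsum]
    refine P.sum_smul_le_sum (isAEPartition_dyadicCell n) hA fun k hk i hi => ?_
    have hk' := Finset.mem_range.1 hk
    have ht := htag k hk i hi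
    rw [add_zero]
    exact hf (Icc_div_two_pow_subset_Icc hk' ⟨le_rfl, ht.1.trans ht.2⟩)
      (Icc_div_two_pow_subset_Icc hk' ht) ht.1
  · rw [hsum]
    refine P.sum_le_sum_smul (isAEPartition_dyadicCell n) hA fun k hk i hi => ?_
    have hk' := Finset.mem_range.1 hk
    have ht := htag k hk i hi
    exact hf (Icc_div_two_pow_subset_Icc hk' ht)
      (Icc_div_two_pow_subset_Icc hk' ⟨ht.1.trans ht.2, le_rfl⟩) ht.2

theorem oM_integrable_of_monotone_general
    {X : Type*} [NormedAddCommGroup X] [Lattice X] [HasSolidNorm X] [IsOrderedAddMonoid X] [NormedSpace ℝ X]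
    (hDC : ∀ s : Set X, s.Nonempty → BddAbove s → ∃ x, IsLUB s x) (f : ℝ → X) (hf : MonotoneOn f (Set.Icc 0 1)) :
    ∃ J : X, HasOMIntegralOn f volume (Set.Icc 0 1) J := by
  obtain ⟨J, hJ⟩ := hDC (range fun n => dyadicSum f n 0) (range_nonempty _)
    ⟨dyadicSum f 0 1, forall_mem_range.2 fun p => dyadicSum_zero_le_dyadicSum_one hf p 0⟩
  have hJ_mem : ∀ n, J ∈ Icc (dyadicSum f n 0) (dyadicSum f n 1) := fun n =>
    ⟨hJ.1 ⟨n, rfl⟩, hJ.2 (forall_mem_range.2 fun p => dyadicSum_zero_le_dyadicSum_one hf p n)⟩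
  have h_inv_two_pow : Tendsto (fun n : ℕ => ((2 : ℝ) ^ n)⁻¹) atTop (𝓝 0) :=
    tendsto_inv_atTop_zero.comp (tendsto_pow_atTop_atTop_of_one_lt one_lt_two)
  have hf01 : 0 ≤ f 1 - f 0 := sub_nonneg.2 (hf (by norm_num) (by norm_num) zero_le_one)
  refine ⟨J, fun n => ((2 : ℝ) ^ n)⁻¹ • (f 1 - f 0),
    isOSeq_smul (fun m n hmn => inv_anti₀ (by positivity) (pow_le_pow_right₀ one_le_two hmn))
      h_inv_two_pow hf01, dyadicGage, dyadicGage_pos, fun n P hP => ?_⟩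
  beta_reduce
  rw [← dyadicSum_one_sub_dyadicSum_zero]
  exact abs_sub_le_of_mem_Icc (P.sum_mem_Icc_dyadicSum hf hP) (hJ_mem n)

theorem oM_integrable_of_monotone
    {X : Type*} [NormedAddCommGroup X] [Lattice X] [HasSolidNorm X] [IsOrderedAddMonoid X] [NormedSpace ℝ X] [CompleteSpace X]
    (hDC : ∀ s : Set X, s.Nonempty → BddAbove s → ∃ x, IsLUB s x) (f : ℝ → X) (hf : MonotoneOn f (Set.Icc 0 1)) :
    ∃ J : X, HasOMIntegralOn f volume (Set.Icc 0 1) J :=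
  oM_integrable_of_monotone_general hDC f hf
end

section
/- Every X-valued step function g = Σ_{i=1}^{k} x_i 1_{E_i} on T (with x_i ∈ X and E_i disjoint Borel sets) is order-Henstock integrable, with integral Σ_i x_i μ(E_i). -/
open MeasureTheory Set Filter

/-!
The Riemann sum of `∑ xᵢ 1_{Eᵢ}` over a tagged partition is `∑ aᵢ • xᵢ`, where `aᵢ` is the
measure of the union of the pieces whose tag lies in `Eᵢ`. By outer regularity choose open
`U ⊇ Eᵢ` and `V ⊇ Eᵢᶜ` of almost the same measure, and a gage so small that balls around points
of `Eᵢ` stay in `U` and the others in `V`; then `|aᵢ - μ Eᵢ| ≤ ε` on every fine partition, even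
when tags lie outside their pieces. In the lattice the error is dominated by `ε • ∑ |xᵢ|`, and
`(1 / (n + 1)) • ∑ |xᵢ|` is an (o)-sequence because the positive cone is closed, which also
makes real scalar multiplication monotone.
-/

section LatticeModule

variable {M : Type*} [Lattice M] [AddCommGroup M]

lemma natCast_div_two_pow_smul_nonneg [IsOrderedAddMonoid M] [Module ℝ M] {x : M} (hx : 0 ≤ x)
    (m n : ℕ) : 0 ≤ ((m : ℝ) / 2 ^ n) • x := by
  induction n with
  | zero => simpa [Nat.cast_smul_eq_nsmul] using nsmul_nonneg hx m
  | succ n ih =>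
    refine nsmul_two_semiclosed ?_
    convert ih using 1
    rw [two_nsmul, ← add_smul, pow_succ]
    ring_nf

variable {R : Type*} [Ring R] [LinearOrder R] [Module R M] [PosSMulMono R M]

lemma abs_smul_le_of_nonneg {c : R} (hc : 0 ≤ c) (x : M) : |c • x| ≤ c • |x| :=
  abs_le'.2 ⟨smul_le_smul_of_nonneg_left (le_abs_self x) hc,
    smul_neg c x ▸ smul_le_smul_of_nonneg_left (neg_le_abs x) hc⟩

lemma abs_smul_le [IsOrderedRing R] (c : R) (x : M) : |c • x| ≤ |c| • |x| := by
  rcases le_total 0 c with hc | hc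
  · rw [abs_of_nonneg hc]
    exact abs_smul_le_of_nonneg hc x
  · rw [abs_of_nonpos hc, ← neg_smul_neg c x, ← abs_neg x]
    exact abs_smul_le_of_nonneg (neg_nonneg.2 hc) _

lemma abs_sum_smul_le [IsOrderedRing R] [IsOrderedAddMonoid M] [SMulPosMono R M] {ι : Type*}
    (s : Finset ι) {a : ι → R} {ε : R} (ha : ∀ i ∈ s, |a i| ≤ ε) (x : ι → M) :
    |∑ i ∈ s, a i • x i| ≤ ε • ∑ i ∈ s, |x i| :=
  calc |∑ i ∈ s, a i • x i| ≤ ∑ i ∈ s, |a i • x i| :=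
        Finset.le_sum_of_subadditive _ abs_zero.le abs_add_le s _
    _ ≤ ∑ i ∈ s, ε • |x i| := Finset.sum_le_sum fun i hi =>
        (abs_smul_le _ _).trans (smul_le_smul_of_nonneg_right (ha i hi) (abs_nonneg _))
    _ = ε • ∑ i ∈ s, |x i| := (Finset.smul_sum ..).symm

end LatticeModule

section NormedLattice

variable {X : Type*} [NormedAddCommGroup X] [Lattice X] [HasSolidNorm X] [IsOrderedAddMonoid X]
  [NormedSpace ℝ X]

lemma HasSolidNorm.smul_nonneg {r : ℝ} (hr : 0 ≤ r) {x : X} (hx : 0 ≤ x) : 0 ≤ r • x :=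
  isClosed_nonneg.mem_of_tendsto
    (((tendsto_nat_floor_mul_div_atTop hr).comp
      (tendsto_pow_atTop_atTop_of_one_lt one_lt_two)).smul_const x)
    (Eventually.of_forall fun n => natCast_div_two_pow_smul_nonneg hx _ n)

instance HasSolidNorm.isOrderedModule : IsOrderedModule ℝ X :=
  .of_smul_nonneg fun _ hr _ hx => HasSolidNorm.smul_nonneg hr hx

lemma isOSeq_smul_const {ε : ℕ → ℝ} (hε : Antitone ε) (hlim : Tendsto ε atTop (nhds 0))
    {u : X} (hu : 0 ≤ u) : IsOSeq fun n => ε n • u := by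
  have hε0 : ∀ n, 0 ≤ ε n := hε.le_of_tendsto hlim
  refine ⟨fun m n hmn => smul_le_smul_of_nonneg_right (hε hmn) hu,
    ⟨?_, fun c hc => ?_⟩⟩
  · rintro _ ⟨n, rfl⟩
    exact smul_nonneg (hε0 n) hu
  · have hlim' : Tendsto (fun n => ε n • u) atTop (nhds 0) := by
      simpa using hlim.smul_const u
    exact ge_of_tendsto hlim' (Eventually.of_forall fun n => hc ⟨n, rfl⟩)

end NormedLattice

lemma exists_isGage_le {T ι : Type*} [Finite ι] {γ : ι → T → ℝ} (hγ : ∀ i, IsGage (γ i)) :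
    ∃ γ₀ : T → ℝ, IsGage γ₀ ∧ ∀ i, γ₀ ≤ γ i := by
  cases isEmpty_or_nonempty ι
  · exact ⟨fun _ => 1, fun _ => one_pos, isEmptyElim⟩
  · have := Fintype.ofFinite ι
    exact ⟨fun t => Finset.univ.inf' Finset.univ_nonempty (γ · t),
      fun t => (Finset.lt_inf'_iff _).2 fun i _ => hγ i t,
      fun i t => Finset.inf'_le _ (Finset.mem_univ i)⟩

lemma exists_isGage_ball_subset {T : Type*} [PseudoMetricSpace T] {O : T → Set T}
    (hO : ∀ t, IsOpen (O t)) (hmem : ∀ t, t ∈ O t) :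
    ∃ γ : T → ℝ, IsGage γ ∧ ∀ t, Metric.ball t (γ t) ⊆ O t := by
  choose γ hγ hball using fun t => Metric.isOpen_iff.1 (hO t) t (hmem t)
  exact ⟨γ, hγ, hball⟩

namespace TaggedPart

variable {T : Type*} [MeasurableSpace T] {A : Set T}

lemma IsFine.mono [PseudoMetricSpace T] {γ γ' : T → ℝ} {P : TaggedPart T A} (hP : P.IsFine γ)
    (h : γ ≤ γ') : P.IsFine γ' :=
  fun i w hw => (hP i w hw).trans_le (h _)

lemma IsFine.biUnion_subset [PseudoMetricSpace T] {γ : T → ℝ} {P : TaggedPart T A}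
    (hP : P.IsFine γ) {s : Set (Fin P.k)} {W : Set T}
    (hW : ∀ p ∈ s, Metric.ball (P.tag p) (γ (P.tag p)) ⊆ W) : ⋃ p ∈ s, P.E p ⊆ W :=
  iUnion₂_subset fun p hp w hw => hW p hp (Metric.mem_ball.2 (hP p w hw))

lemma compl_biUnion_subset (P : TaggedPart T univ) (s : Set (Fin P.k)) :
    (⋃ p ∈ s, P.E p)ᶜ ⊆ ⋃ p ∈ sᶜ, P.E p := by
  intro w hw
  obtain ⟨p, hp⟩ := mem_iUnion.1 (P.cover.symm ▸ mem_univ w : w ∈ ⋃ p, P.E p)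
  exact mem_biUnion (fun hps => hw (mem_biUnion hps hp)) hp

lemma sum_sum_smul_const {X ι : Type*} [Fintype ι] [AddCommGroup X] [Module ℝ X]
    (P : TaggedPart T A) (μ : Measure T) (φ : ι → T → ℝ) (x : ι → X) :
    P.sum (fun t => ∑ i, φ i t • x i) μ = ∑ i, P.sum (φ i) μ • x i := by
  simp only [TaggedPart.sum, Finset.smul_sum, smul_smul, Finset.sum_smul]
  exact Finset.sum_comm

lemma sum_indicator_one (P : TaggedPart T A) (μ : Measure T) [IsFiniteMeasure μ] (E : Set T) :
    P.sum (E.indicator 1) μ = μ.real (⋃ p ∈ {p | P.tag p ∈ E}, P.E p) := by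
  classical
  rw [← Finset.coe_filter_univ, Finset.set_biUnion_coe, measureReal_biUnion_finset
    (fun p _ q _ hpq => P.disj p q hpq) fun p _ => P.meas p, Finset.sum_filter]
  refine Finset.sum_congr rfl fun p _ => ?_
  by_cases h : P.tag p ∈ E <;> simp [h, measureReal_def]

end TaggedPart

section Measure

variable {T : Type*} [MeasurableSpace T] (μ : Measure T) [IsFiniteMeasure μ]

lemma exists_isOpen_superset_measureReal_le [TopologicalSpace T] [μ.OuterRegular] (s : Set T)
    {ε : ℝ} (hε : 0 < ε) : ∃ U, s ⊆ U ∧ IsOpen U ∧ μ.real U ≤ μ.real s + ε := by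
  obtain ⟨U, hsU, hU, hμU⟩ := s.exists_isOpen_le_add μ (ENNReal.ofReal_pos.2 hε).ne'
  refine ⟨U, hsU, hU, ?_⟩
  rw [measureReal_def, measureReal_def, ← ENNReal.toReal_ofReal hε.le,
    ← ENNReal.toReal_add (measure_ne_top μ s) ENNReal.ofReal_ne_top]
  exact ENNReal.toReal_mono (by finiteness) hμU

lemma abs_measureReal_sub_le_of_subset {A E U V : Set T} {ε : ℝ} (hA : MeasurableSet A)
    (hE : MeasurableSet E) (hAU : A ⊆ U) (hAV : Aᶜ ⊆ V) (hU : μ.real U ≤ μ.real E + ε)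
    (hV : μ.real V ≤ μ.real Eᶜ + ε) : |μ.real A - μ.real E| ≤ ε := by
  refine abs_le.2 ⟨?_, by linarith [measureReal_mono (μ := μ) hAU]⟩
  linarith [measureReal_add_measureReal_compl (μ := μ) hA,
    measureReal_add_measureReal_compl (μ := μ) hE, measureReal_mono (μ := μ) hAV]

end Measure

theorem hasNormMIntegralOn_indicator_one {T : Type*} [PseudoMetricSpace T] [MeasurableSpace T]
    (μ : Measure T) [IsFiniteMeasure μ] [μ.OuterRegular] {E : Set T} (hE : MeasurableSet E) :
    HasNormMIntegralOn (E.indicator 1) μ univ (μ.real E) := by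
  classical
  intro ε hε
  obtain ⟨U, hEU, hU, hμU⟩ := exists_isOpen_superset_measureReal_le μ E hε
  obtain ⟨V, hEV, hV, hμV⟩ := exists_isOpen_superset_measureReal_le μ Eᶜ hε
  obtain ⟨γ, hγ, hball⟩ := exists_isGage_ball_subset (O := fun t => if t ∈ E then U else V)
    (fun t => by split_ifs; exacts [hU, hV]) fun t => by split_ifs with h; exacts [hEU h, hEV h]
  refine ⟨γ, hγ, fun P hP => ?_⟩
  rw [P.sum_indicator_one, Real.norm_eq_abs]
  refine abs_measureReal_sub_le_of_subset μ (Finite.measurableSet_biUnion (toFinite _)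
    fun p _ => P.meas p) hE (hP.biUnion_subset fun p hp => ?_)
    ((P.compl_biUnion_subset _).trans (hP.biUnion_subset fun p hp => ?_)) hμU hμV
  · simpa [show P.tag p ∈ E from hp] using hball (P.tag p)
  · simpa [show P.tag p ∉ E from hp] using hball (P.tag p)

section Integral

variable {T : Type*} [PseudoMetricSpace T] [MeasurableSpace T] {μ : Measure T} {A : Set T}
  {X : Type*} [NormedAddCommGroup X] [NormedSpace ℝ X]

lemma HasOMIntegralOn.hasOHIntegralOn [Lattice X] {f : T → X} {J : X}
    (h : HasOMIntegralOn f μ A J) : HasOHIntegralOn f μ A J :=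
  let ⟨b, hb, γ, hγ, hP⟩ := h
  ⟨b, hb, γ, hγ, fun n P _ => hP n P⟩

lemma exists_isGage_forall_norm_sum_sub_le {ι : Type*} [Finite ι] {f : ι → T → X} {J : ι → X}
    (hf : ∀ i, HasNormMIntegralOn (f i) μ A (J i)) {ε : ℝ} (hε : 0 < ε) :
    ∃ γ : T → ℝ, IsGage γ ∧
      ∀ P : TaggedPart T A, P.IsFine γ → ∀ i, ‖P.sum (f i) μ - J i‖ ≤ ε := by
  choose γ hγ hP using fun i => hf i ε hε
  obtain ⟨γ₀, hγ₀, hle⟩ := exists_isGage_le hγ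
  exact ⟨γ₀, hγ₀, fun P hfine i => hP i P (hfine.mono (hle i))⟩

theorem hasOMIntegralOn_sum_smul_const [Lattice X] [HasSolidNorm X] [IsOrderedAddMonoid X]
    {ι : Type*} [Fintype ι] {φ : ι → T → ℝ} {c : ι → ℝ}
    (hφ : ∀ i, HasNormMIntegralOn (φ i) μ A (c i)) (x : ι → X) :
    HasOMIntegralOn (fun t => ∑ i, φ i t • x i) μ A (∑ i, c i • x i) := by
  have hu : 0 ≤ ∑ i, |x i| := Finset.sum_nonneg fun i _ => abs_nonneg (x i)
  refine ⟨_, isOSeq_smul_const (fun _ _ => Nat.one_div_le_one_div)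
    tendsto_one_div_add_atTop_nhds_zero_nat hu, ?_⟩
  choose γ hγ hP using fun n : ℕ =>
    exists_isGage_forall_norm_sum_sub_le hφ (Nat.one_div_pos_of_nat (n := n))
  refine ⟨γ, hγ, fun n P hfine => ?_⟩
  rw [P.sum_sum_smul_const, ← Finset.sum_sub_distrib]
  simp only [← sub_smul]
  exact abs_sum_smul_le _ (fun i _ => hP n P hfine i) x

end Integral

theorem oH_integrable_step_function_general {T : Type*} [MetricSpace T] [MeasurableSpace T]
    (μ : Measure T) [IsFiniteMeasure μ] [μ.Regular]
    {X : Type*} [NormedAddCommGroup X] [Lattice X] [HasSolidNorm X] [IsOrderedAddMonoid X] [NormedSpace ℝ X]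
    (k : ℕ) (x : Fin k → X) (E : Fin k → Set T)
    (hE : ∀ i, MeasurableSet (E i)) :
    HasOHIntegralOn (fun t => ∑ i, (E i).indicator (fun _ => x i) t) μ Set.univ
      (∑ i, (μ (E i)).toReal • x i) := by
  have h := hasOMIntegralOn_sum_smul_const
    (fun i => hasNormMIntegralOn_indicator_one μ (hE i)) x
  simp only [← indicator_smul_const_apply, Pi.one_apply, one_smul] at h
  exact h.hasOHIntegralOn

theorem oH_integrable_step_function {T : Type*} [MetricSpace T] [CompactSpace T] [MeasurableSpace T] [BorelSpace T]
    (μ : Measure T) [IsFiniteMeasure μ] [μ.Regular]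
    {X : Type*} [NormedAddCommGroup X] [Lattice X] [HasSolidNorm X] [IsOrderedAddMonoid X] [NormedSpace ℝ X] [CompleteSpace X] [NullSingletonClass μ]
    (hDC : ∀ s : Set X, s.Nonempty → BddAbove s → ∃ x, IsLUB s x) (k : ℕ) (x : Fin k → X) (E : Fin k → Set T)
    (hE : ∀ i, MeasurableSet (E i)) (hdisj : ∀ i j, i ≠ j → Disjoint (E i) (E j)) :
    HasOHIntegralOn (fun t => ∑ i, (E i).indicator (fun _ => x i) t) μ Set.univ
      (∑ i, (μ (E i)).toReal • x i) :=
  oH_integrable_step_function_general μ k x E hE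
end
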